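/- arXiv:2311.12444 — 5 statements merged into one kernel-verified Lean document; each statement's English description precedes it below -/
import Mathlib

section
/- For any two density matrices ρ and σ on a finite-dimensional complex Hilbert space, the trace distance satisfies T(ρ, σ) ≤ √(1 − Tr(ρσ)). -/
/-! Diagonalise `ρ - σ` by a unitary and let `s` be the set of indices of its nonnegative
eigenvalues. In that basis the trace distance is `a - b`, where `a` and `b` are the weights that
the diagonals of `ρ` and `σ` put on `s`. Splitting `Tr(ρσ) = ∑ ρᵢⱼ σⱼᵢ` into the four blocks cut
out by `s` and its complement, and bounding each block by Cauchy–Schwarz together with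
`|ρᵢⱼ|² ≤ ρᵢᵢ ρⱼⱼ`, gives `Tr(ρσ) ≤ (√(ab) + √((1 - a)(1 - b)))² ≤ 1 - (a - b)²`. -/

open scoped ComplexOrder

lemma sum_abs_eq_two_mul_sum_filter_nonneg {ι : Type*} [Fintype ι] (f : ι → ℝ)
    (hf : ∑ i, f i = 0) : ∑ i, |f i| = 2 * ∑ i with 0 ≤ f i, f i := by
  have habs : ∀ x : ℝ, |x| = 2 * (if 0 ≤ x then x else 0) - x := fun x => by
    split_ifs with hx
    · rw [abs_of_nonneg hx]; ring
    · rw [abs_of_neg (not_le.1 hx)]; ring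
  simp_rw [habs, Finset.sum_sub_distrib, hf, sub_zero, Finset.sum_filter, Finset.mul_sum]

lemma sq_sqrt_mul_add_sqrt_one_sub_mul_le {a b : ℝ} (ha₀ : 0 ≤ a) (ha₁ : a ≤ 1) (hb₀ : 0 ≤ b)
    (hb₁ : b ≤ 1) : (√(a * b) + √((1 - a) * (1 - b))) ^ 2 ≤ 1 - (a - b) ^ 2 := by
  have ha₁' : 0 ≤ 1 - a := sub_nonneg.2 ha₁
  have hb₁' : 0 ≤ 1 - b := sub_nonneg.2 hb₁
  have hcross : √(a * b) * √((1 - a) * (1 - b)) = √(a * (1 - a)) * √(b * (1 - b)) := by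
    rw [← Real.sqrt_mul (by positivity), ← Real.sqrt_mul (by positivity)]
    ring_nf
  -- the left side plus `(a - b) ^ 2` equals `1 - (√(a (1 - a)) - √(b (1 - b))) ^ 2`
  nlinarith [sq_nonneg (√(a * (1 - a)) - √(b * (1 - b))), Real.sq_sqrt (mul_nonneg ha₀ hb₀),
    Real.sq_sqrt (mul_nonneg ha₁' hb₁'), Real.sq_sqrt (mul_nonneg ha₀ ha₁'),
    Real.sq_sqrt (mul_nonneg hb₀ hb₁')]

namespace Matrix

variable {ι 𝕜 : Type*} [RCLike 𝕜]

open RCLike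

lemma PosSemidef.norm_apply_sq_le {M : Matrix ι ι 𝕜} (hM : M.PosSemidef) (i j : ι) :
    ‖M i j‖ ^ 2 ≤ re (M i i) * re (M j j) := by
  classical
  have hdet := (hM.submatrix ![i, j]).det_nonneg
  rw [det_fin_two] at hdet
  simp only [submatrix_apply, cons_val_zero, cons_val_one, sub_nonneg] at hdet
  rw [← hM.isHermitian.apply j i, star_def, mul_conj,
    ← hM.isHermitian.coe_re_apply_self i, ← hM.isHermitian.coe_re_apply_self j] at hdet
  exact_mod_cast hdet

lemma PosSemidef.re_apply_self_nonneg {M : Matrix ι ι 𝕜} (hM : M.PosSemidef) (i : ι) :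
    0 ≤ re (M i i) :=
  (nonneg_iff.1 hM.diag_nonneg).1

lemma PosSemidef.sum_norm_mul_norm_le {M N : Matrix ι ι 𝕜} (hM : M.PosSemidef)
    (hN : N.PosSemidef) (s t : Finset ι) :
    ∑ i ∈ s, ∑ j ∈ t, ‖M i j‖ * ‖N i j‖ ≤
      √((∑ i ∈ s, re (M i i)) * ∑ i ∈ s, re (N i i)) *
        √((∑ j ∈ t, re (M j j)) * ∑ j ∈ t, re (N j j)) := by
  have hsq {A : Matrix ι ι 𝕜} (hA : A.PosSemidef) :
      ∑ p ∈ s ×ˢ t, ‖A p.1 p.2‖ ^ 2 ≤ (∑ i ∈ s, re (A i i)) * ∑ j ∈ t, re (A j j) := by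
    rw [Finset.sum_mul_sum, ← Finset.sum_product']
    exact Finset.sum_le_sum fun p _ => hA.norm_apply_sq_le p.1 p.2
  have hmass {A : Matrix ι ι 𝕜} (hA : A.PosSemidef) (u : Finset ι) :
      0 ≤ ∑ i ∈ u, re (A i i) :=
    Finset.sum_nonneg fun i _ => hA.re_apply_self_nonneg i
  rw [← Finset.sum_product']
  calc ∑ p ∈ s ×ˢ t, ‖M p.1 p.2‖ * ‖N p.1 p.2‖
      ≤ √(∑ p ∈ s ×ˢ t, ‖M p.1 p.2‖ ^ 2) * √(∑ p ∈ s ×ˢ t, ‖N p.1 p.2‖ ^ 2) :=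
        Real.sum_mul_le_sqrt_mul_sqrt _ _ _
    _ ≤ √((∑ i ∈ s, re (M i i)) * ∑ j ∈ t, re (M j j)) *
          √((∑ i ∈ s, re (N i i)) * ∑ j ∈ t, re (N j j)) := by
        gcongr
        exacts [hsq hM, hsq hN]
    _ = _ := by
        rw [← Real.sqrt_mul (mul_nonneg (hmass hM s) (hmass hM t)),
          ← Real.sqrt_mul (mul_nonneg (hmass hM s) (hmass hN s))]
        ring_nf

variable [Fintype ι]

lemma re_trace_mul_le_sum_norm_mul_norm (M : Matrix ι ι 𝕜) {N : Matrix ι ι 𝕜}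
    (hN : N.IsHermitian) : re (M * N).trace ≤ ∑ i, ∑ j, ‖M i j‖ * ‖N i j‖ := by
  simp only [trace, diag_apply, mul_apply, map_sum]
  gcongr with i _ j _
  calc re (M i j * N j i) ≤ ‖M i j * N j i‖ := re_le_norm _
    _ = ‖M i j‖ * ‖N i j‖ := by rw [norm_mul, ← hN.apply i j, norm_star]

lemma PosSemidef.re_trace_mul_le [DecidableEq ι] {M N : Matrix ι ι 𝕜} (hM : M.PosSemidef)
    (hN : N.PosSemidef) (s : Finset ι) :
    re (M * N).trace ≤
      (√((∑ i ∈ s, re (M i i)) * ∑ i ∈ s, re (N i i)) +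
        √((∑ i ∈ sᶜ, re (M i i)) * ∑ i ∈ sᶜ, re (N i i))) ^ 2 := by
  have hblock := hM.sum_norm_mul_norm_le hN
  refine (re_trace_mul_le_sum_norm_mul_norm M hN.isHermitian).trans ?_
  simp only [← s.sum_add_sum_compl, Finset.sum_add_distrib]
  linarith [hblock s s, hblock s sᶜ, hblock sᶜ s, hblock sᶜ sᶜ]

lemma PosSemidef.re_trace_mul_le_one_sub_sq [DecidableEq ι] {M N : Matrix ι ι 𝕜}
    (hM : M.PosSemidef) (hN : N.PosSemidef) (hM₁ : M.trace = 1) (hN₁ : N.trace = 1)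
    (s : Finset ι) : re (M * N).trace ≤ 1 - (∑ i ∈ s, re (M i i - N i i)) ^ 2 := by
  have hsplit {A : Matrix ι ι 𝕜} (hA : A.trace = 1) :
      ∑ i ∈ sᶜ, re (A i i) = 1 - ∑ i ∈ s, re (A i i) := by
    rw [eq_sub_iff_add_eq', Finset.sum_add_sum_compl, ← map_sum]
    simpa [trace] using congrArg re hA
  have hmass {A : Matrix ι ι 𝕜} (hA : A.PosSemidef) (hA₁ : A.trace = 1) :
      0 ≤ ∑ i ∈ s, re (A i i) ∧ ∑ i ∈ s, re (A i i) ≤ 1 := by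
    refine ⟨Finset.sum_nonneg fun i _ => hA.re_apply_self_nonneg i, ?_⟩
    rw [← sub_nonneg, ← hsplit hA₁]
    exact Finset.sum_nonneg fun i _ => hA.re_apply_self_nonneg i
  obtain ⟨ha₀, ha₁⟩ := hmass hM hM₁
  obtain ⟨hb₀, hb₁⟩ := hmass hN hN₁
  have := hM.re_trace_mul_le hN s
  rw [hsplit hM₁, hsplit hN₁] at this
  simp only [map_sub, Finset.sum_sub_distrib]
  exact this.trans (sq_sqrt_mul_add_sqrt_one_sub_mul_le ha₀ ha₁ hb₀ hb₁)

lemma trace_conjStarAlgAut [DecidableEq ι] (u : unitaryGroup ι 𝕜) (A : Matrix ι ι 𝕜) :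
    (Unitary.conjStarAlgAut 𝕜 _ u A).trace = A.trace := by
  rw [Unitary.conjStarAlgAut_apply, trace_mul_cycle, Unitary.coe_star_mul_self, one_mul]

lemma PosSemidef.conjStarAlgAut [DecidableEq ι] {A : Matrix ι ι 𝕜} (hA : A.PosSemidef)
    (u : unitaryGroup ι 𝕜) : (Unitary.conjStarAlgAut 𝕜 _ u A).PosSemidef := by
  rw [Unitary.conjStarAlgAut_apply, star_eq_conjTranspose]
  exact hA.mul_mul_conjTranspose_same _

end Matrix

open Matrix in
/-- Trace distance bound: for density matrices ρ, σ,
    T(ρ,σ) = (1/2)‖ρ−σ‖₁ ≤ √(1 − Tr(ρσ)). -/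
theorem trace_distance_le_sqrt_one_sub_trace
    (n : ℕ) (ρ σ : Matrix (Fin n) (Fin n) ℂ)
    (hρ : ρ.PosSemidef) (hρ1 : ρ.trace = 1)
    (hσ : σ.PosSemidef) (hσ1 : σ.trace = 1)
    (h : (ρ - σ).IsHermitian) :
    (1 / 2) * ∑ i, |h.eigenvalues i| ≤ Real.sqrt (1 - ((ρ * σ).trace).re) := by
  set u := star h.eigenvectorUnitary
  set conj := Unitary.conjStarAlgAut ℂ (Matrix (Fin n) (Fin n) ℂ) u with hconj
  have hdiag (i : Fin n) : RCLike.re (conj ρ i i - conj σ i i) = h.eigenvalues i := by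
    rw [← Matrix.sub_apply, ← map_sub, h.conjStarAlgAut_star_eigenvectorUnitary]
    simp
  have hsum : ∑ i, h.eigenvalues i = 0 := by
    have htr := h.trace_eq_sum_eigenvalues
    rw [trace_sub, hρ1, hσ1, sub_self, ← RCLike.ofReal_sum] at htr
    exact RCLike.ofReal_eq_zero.1 htr.symm
  have key := (hρ.conjStarAlgAut u).re_trace_mul_le_one_sub_sq (hσ.conjStarAlgAut u)
    (by rw [trace_conjStarAlgAut, hρ1]) (by rw [trace_conjStarAlgAut, hσ1])
    {i | 0 ≤ h.eigenvalues i}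
  rw [← map_mul, trace_conjStarAlgAut, ← hconj, Finset.sum_congr rfl fun i _ => hdiag i] at key
  rw [sum_abs_eq_two_mul_sum_filter_nonneg _ hsum, one_div, inv_mul_cancel_left₀ two_ne_zero]
  exact (le_abs_self _).trans (Real.abs_le_sqrt (le_sub_comm.1 key))
end

section
/- Let u: [0,1] → ℝ be given for x ∈ [0,c) (some c > 0) by u(x) = (2 − 2x)/(4 − 5x). Then there exist no N ∈ ℕ and Hermitian matrices A, B ∈ ℂ^{N×N} such that u(x) equals the largest eigenvalue of xA + B for all x ∈ [0, c). -/
/-!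
If `u x = (2 - 2x) / (4 - 5x)` were the top eigenvalue of `x • A + B`, it would be a root of the
characteristic polynomial `P_x` of `x • A + B` for all small `x > 0`. The coefficients of `P_x`
are polynomials in `x` and `P_x` is monic of degree `N`, so clearing denominators gives the
polynomial `G x = ∑ i, P_i(x) (2 - 2x)^i (4 - 5x)^(N - i)`, which then vanishes on an interval,
hence identically. But at the pole `x = 4/5` only the leading term survives:
`G (4/5) = (2/5)^N ≠ 0`.
-/

open Polynomial

theorem Polynomial.Monic.finite_setOf_isRoot_map_evalRingHom_div {K : Type*} [Field K]
    {P : K[X][X]} (hP : P.Monic) {p q : K[X]} {a : K} (hqa : q.eval a = 0)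
    (hpa : p.eval a ≠ 0) :
    {x : K | q.eval x ≠ 0 ∧ (P.map (evalRingHom x)).IsRoot (p.eval x / q.eval x)}.Finite := by
  -- `G = ∑ i, P.coeff i * p ^ i * q ^ (P.natDegree - i)`
  set G : K[X] := (P.scaleRoots q).eval p
  have hG_eval (x : K) : G.eval x = (P.scaleRoots q).eval₂ (evalRingHom x) (p.eval x) := by
    rw [← coe_evalRingHom, eval₂_hom]
  have hGa : G.eval a = p.eval a ^ P.natDegree := by
    rw [hG_eval, ← eval_map, map_scaleRoots _ _ _ (by simp [hP.leadingCoeff]), coe_evalRingHom,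
      hqa, scaleRoots_zero, (hP.map _).leadingCoeff, hP.natDegree_map]
    simp
  have hG : G ≠ 0 := fun h => hpa (eq_zero_of_pow_eq_zero (by rw [← hGa, h, eval_zero]))
  refine (finite_setOfPred_isRoot hG).subset fun x ⟨hqx, hx⟩ => ?_
  have hpx : p.eval x = evalRingHom x q * (p.eval x / q.eval x) := by
    rw [coe_evalRingHom, mul_div_cancel₀ _ hqx]
  rw [Set.mem_ofPred_eq, IsRoot, hG_eval, hpx, scaleRoots_eval₂_mul, ← eval_map, hx.eq_zero,
    mul_zero]

theorem Matrix.charpoly_X_smul_add_map_evalRingHom {n R : Type*} [Fintype n] [DecidableEq n]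
    [CommRing R] (A B : Matrix n n R) (x : R) :
    ((X : R[X]) • A.map C + B.map C).charpoly.map (evalRingHom x) = (x • A + B).charpoly := by
  rw [← charpoly_map]
  congr
  ext i j
  simp [mul_comm x]

theorem Matrix.IsHermitian.isRoot_charpoly_eigenvalues {n 𝕜 : Type*} [Fintype n] [DecidableEq n]
    [RCLike 𝕜] {H : Matrix n n 𝕜} (hH : H.IsHermitian) (i : n) :
    H.charpoly.IsRoot (hH.eigenvalues i) :=
  mem_spectrum_iff_isRoot_charpoly.mp <|
    spectrum.algebraMap_mem 𝕜 (hH.eigenvalues_mem_spectrum_real i)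

/-- The non-linear rational function u(x) = (2−2x)/(4−5x) cannot be the largest
    eigenvalue of xA + B for Hermitian matrices A, B, on any interval [0, c). -/
theorem no_hermitian_pencil_realizes_rational
    (c : ℝ) (hc : 0 < c) :
    ¬ ∃ (N : ℕ) (A B : Matrix (Fin N) (Fin N) ℂ),
        A.IsHermitian ∧ B.IsHermitian ∧
        ∀ x : ℝ, x ∈ Set.Ico 0 c →
          ∀ hH : ((x : ℂ) • A + B).IsHermitian,
            IsGreatest (Set.range hH.eigenvalues) ((2 - 2 * x) / (4 - 5 * x)) := by
  rintro ⟨N, A, B, hA, hB, hmax⟩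
  have hfin := (Matrix.charpoly_monic ((X : ℂ[X]) • A.map C + B.map C)
    ).finite_setOf_isRoot_map_evalRingHom_div (p := 2 - 2 * X) (q := 4 - 5 * X) (a := 4 / 5)
    (by norm_num) (by norm_num)
  refine hfin.not_infinite (((Set.Ioo_infinite (lt_min hc (by norm_num : (0 : ℝ) < 4 / 5))).image
    Complex.ofReal_injective.injOn).mono ?_)
  rintro _ ⟨x, ⟨hx0, hxm⟩, rfl⟩
  have hx : 0 < 4 - 5 * x := by linarith [hxm.trans_le (min_le_right _ _)]
  have hH : ((x : ℂ) • A + B).IsHermitian := (hA.smul (Complex.conj_ofReal x)).add hB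
  obtain ⟨i, hi⟩ := (hmax x ⟨hx0.le, hxm.trans_le (min_le_left _ _)⟩ hH).1
  refine ⟨?_, ?_⟩
  · simpa using Complex.ofReal_ne_zero.2 hx.ne'
  · rw [Matrix.charpoly_X_smul_add_map_evalRingHom]
    simpa [hi] using hH.isRoot_charpoly_eigenvalues i
end

section
/- For x, y ∈ ℝ, the largest eigenvalue of xI + diag(y, y/2) − [[79/24, √21/8],[√21/8, 19/24]] equals x − 49/24 + (1/4)(3y + √(121/4 − 10y + y²)). -/
/-!
The eigenvalues of a real symmetric `2 × 2` matrix are the roots of `r² - (tr A) r + det A`,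
whose discriminant `(a - c)² + 4b²` is nonnegative; the larger root is `(tr A + √disc) / 2`.
For the matrix at hand the discriminant is `(121/4 - 10y + y²) / 4`.
-/

open Matrix

lemma Matrix.mem_spectrum_fin_two_iff {K : Type*} [Field K] (A : Matrix (Fin 2) (Fin 2) K)
    (r : K) : r ∈ spectrum K A ↔ r ^ 2 - A.trace * r + A.det = 0 := by
  rw [mem_spectrum_iff_isRoot_charpoly, charpoly_fin_two]
  simp

lemma isGreatest_quadratic_roots {t d : ℝ} (hdisc : 0 ≤ t ^ 2 - 4 * d) :
    IsGreatest {r : ℝ | r ^ 2 - t * r + d = 0} ((t + √(t ^ 2 - 4 * d)) / 2) := by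
  have hsq : √(t ^ 2 - 4 * d) ^ 2 = t ^ 2 - 4 * d := Real.sq_sqrt hdisc
  have hfactor : ∀ r : ℝ, r ^ 2 - t * r + d =
      (r - (t + √(t ^ 2 - 4 * d)) / 2) * (r - (t - √(t ^ 2 - 4 * d)) / 2) := fun r => by
    linear_combination (1 / 4 : ℝ) * hsq
  refine ⟨(hfactor _).trans (by ring), fun r hr => ?_⟩
  rcases mul_eq_zero.mp ((hfactor r).symm.trans hr) with h | h
  · linarith
  · linarith [Real.sqrt_nonneg (t ^ 2 - 4 * d)]

lemma Matrix.IsHermitian.isGreatest_eigenvalues_fin_two {A : Matrix (Fin 2) (Fin 2) ℝ}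
    (hA : A.IsHermitian) :
    IsGreatest (Set.range hA.eigenvalues) ((A.trace + √(A.trace ^ 2 - 4 * A.det)) / 2) := by
  have hsymm : A 1 0 = A 0 1 := (hA.apply 1 0).symm
  have hdisc : A.trace ^ 2 - 4 * A.det = (A 0 0 - A 1 1) ^ 2 + 4 * A 0 1 ^ 2 := by
    rw [trace_fin_two, det_fin_two, hsymm]
    ring
  have hspec : Set.range hA.eigenvalues = {r | r ^ 2 - A.trace * r + A.det = 0} := by
    ext r
    rw [← hA.spectrum_real_eq_range_eigenvalues, mem_spectrum_fin_two_iff]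
    rfl
  rw [hspec]
  exact isGreatest_quadratic_roots (by rw [hdisc]; positivity)

/-- The largest eigenvalue of xI + diag(y, y/2) − [[79/24, √21/8],[√21/8, 19/24]]
    equals x − 49/24 + (1/4)(3y + √(121/4 − 10y + y²)). -/
theorem buyer_utility_eigenvalue
    (x y : ℝ)
    (hH : (x • (1 : Matrix (Fin 2) (Fin 2) ℝ) +
            Matrix.diagonal ![y, y/2] -
            !![79/24, Real.sqrt 21 / 8; Real.sqrt 21 / 8, 19/24]).IsHermitian) :
    IsGreatest (Set.range hH.eigenvalues)
      (x - 49/24 + (1/4) * (3 * y + Real.sqrt (121/4 - 10 * y + y^2))) := by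
  convert hH.isGreatest_eigenvalues_fin_two using 1
  have hA : x • (1 : Matrix (Fin 2) (Fin 2) ℝ) + Matrix.diagonal ![y, y/2] -
      !![79/24, Real.sqrt 21 / 8; Real.sqrt 21 / 8, 19/24] =
      !![x + y - 79/24, -(√21 / 8); -(√21 / 8), x + y / 2 - 19/24] := by
    ext i j
    fin_cases i <;> fin_cases j <;> simp
  have hsqrt21 : √21 ^ 2 = 21 := Real.sq_sqrt (by norm_num)
  have hdisc : (x + y - 79/24 + (x + y / 2 - 19/24)) ^ 2 -
      4 * ((x + y - 79/24) * (x + y / 2 - 19/24) - -(√21 / 8) * -(√21 / 8)) =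
      (121/4 - 10 * y + y^2) / 2 ^ 2 := by
    linear_combination (1 / 16 : ℝ) * hsqrt21
  rw [hA, trace_fin_two_of, det_fin_two_of, hdisc, Real.sqrt_div' _ (by positivity),
    Real.sqrt_sq zero_le_two]
  ring
end

section
/- Let ρ be a 4×4 positive semidefinite Hermitian matrix with partial trace over the second qubit equal to (1/2)I₂ (i.e., ρ₁₁ + ρ₂₂ = ρ₃₃ + ρ₄₄ = 1/2 where indices refer to the 2×2 blocks' diagonal reduced entries: (ρ)₁₁+(ρ)₂₂ = 1/2 and (ρ)₃₃+(ρ)₄₄ = 1/2, and off-diagonal reduced entries vanish appropriately). Let C(y) be the 4×4 matrix with diagonal (9y/16 − 9/20, 0, −6/5, −6/5), corner entries C₁₄ = C₄₁ = −3/10, and zeros elsewhere. Then max over such ρ of Tr(ρ C(y)) equals max over α ∈ [0, 1/2] of (9y/16 − 9/20)α + (3/5)√(α/2) − 3/5. -/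
/-!
With 0-based indices: under `Tr₂ ρ = I/2` the payoff `Re Tr(ρ C(y))` depends only on
`α = Re ρ₀₀ ∈ [0, 1/2]`, on `Re ρ₀₃`, and on `ρ₂₂ + ρ₃₃ = 1/2`. Positivity of the `{0, 3}` principal minor gives
`-Re ρ₀₃ ≤ √(ρ₀₀ ρ₃₃) ≤ √(α/2)`, so every payoff is bounded by the one-variable objective at `α`.
Conversely the state `v v* + (1/2 - α) E₁₁` with `v = (√α, 0, 0, -√(1/2))` attains the objective,
so both sets of values dominate each other and have the same supremum.
-/

open scoped ComplexOrder

noncomputable def Cmat (y : ℝ) : Matrix (Fin 4) (Fin 4) ℂ :=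
  !![((9*y/16 - 9/20 : ℝ) : ℂ), 0, 0, -3/10;
     0, 0, 0, 0;
     0, 0, -6/5, 0;
     -3/10, 0, 0, -6/5]

namespace Matrix.PosSemidef

variable {n : Type*} {A : Matrix n n ℂ}

theorem normSq_apply_le (hA : A.PosSemidef) (i j : n) :
    Complex.normSq (A i j) ≤ (A i i).re * (A j j).re := by
  have hdet := (hA.submatrix ![i, j]).det_nonneg
  simp only [det_fin_two, submatrix_apply, cons_val_zero, cons_val_one,
    ← hA.isHermitian.apply j i, Complex.star_def, Complex.mul_conj] at hdet
  have hjj : (A j j).im = 0 := (hA.diag_nonneg (i := j)).2.symm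
  simpa [hjj] using (Complex.le_def.mp hdet).1

theorem neg_re_apply_le_sqrt (hA : A.PosSemidef) (i j : n) :
    -(A i j).re ≤ √((A i i).re * (A j j).re) :=
  (neg_le_abs _).trans <| Real.abs_le_sqrt <|
    (sq (A i j).re).trans_le ((Complex.re_sq_le_normSq _).trans (hA.normSq_apply_le i j))

theorem re_apply_mem_Icc_of_add_eq (hA : A.PosSemidef) {i j : n} {c : ℂ}
    (h : A i i + A j j = c) : (A i i).re ∈ Set.Icc 0 c.re := by
  have hi := (Complex.le_def.mp (hA.diag_nonneg (i := i))).1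
  have hj := (Complex.le_def.mp (hA.diag_nonneg (i := j))).1
  have hc := congrArg Complex.re h
  simp only [Complex.zero_re, Complex.add_re] at hi hj hc
  constructor <;> linarith

end Matrix.PosSemidef

open Matrix

theorem trace_mul_Cmat (y : ℝ) (ρ : Matrix (Fin 4) (Fin 4) ℂ) :
    (ρ * Cmat y).trace = ((9*y/16 - 9/20 : ℝ) : ℂ) * ρ 0 0
      - 3/10 * (ρ 0 3 + ρ 3 0) - 6/5 * (ρ 2 2 + ρ 3 3) := by
  simp only [trace, diag_apply, mul_apply, Fin.sum_univ_four, Cmat, of_apply, cons_val',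
    cons_val_zero, cons_val_one, cons_val, cons_val_fin_one]
  ring

theorem re_trace_mul_Cmat (y : ℝ) (ρ : Matrix (Fin 4) (Fin 4) ℂ) :
    ((ρ * Cmat y).trace).re = (9*y/16 - 9/20) * (ρ 0 0).re
      - 3/10 * (ρ 0 3 + ρ 3 0).re - 6/5 * (ρ 2 2 + ρ 3 3).re := by
  rw [trace_mul_Cmat]
  simp [Complex.mul_re]

theorem re_trace_mul_Cmat_le {y : ℝ} {ρ : Matrix (Fin 4) (Fin 4) ℂ} (hρ : ρ.PosSemidef)
    (h01 : ρ 0 0 + ρ 1 1 = 1/2) (h23 : ρ 2 2 + ρ 3 3 = 1/2) :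
    ((ρ * Cmat y).trace).re ≤
      (9*y/16 - 9/20) * (ρ 0 0).re + 3/5 * √((ρ 0 0).re / 2) - 3/5 := by
  obtain ⟨ha0, -⟩ := hρ.re_apply_mem_Icc_of_add_eq h01
  obtain ⟨-, hd⟩ := hρ.re_apply_mem_Icc_of_add_eq ((add_comm _ _).trans h23)
  norm_num at hd
  have hcoh : -(ρ 0 3).re ≤ √((ρ 0 0).re / 2) :=
    (hρ.neg_re_apply_le_sqrt 0 3).trans <| Real.sqrt_le_sqrt <| by
      rw [div_eq_mul_one_div]; exact mul_le_mul_of_nonneg_left hd ha0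
  have h30 : (ρ 3 0).re = (ρ 0 3).re := by
    rw [← hρ.isHermitian.apply 0 3, Complex.star_def, Complex.conj_re]
  rw [re_trace_mul_Cmat, Complex.add_re, h30, h23, show (1/2 : ℂ).re = 1/2 by norm_num]
  linarith

noncomputable def eprState (α : ℝ) : Matrix (Fin 4) (Fin 4) ℂ :=
  !![(α : ℂ), 0, 0, -(√(α/2) : ℂ);
     0, ((1/2 - α : ℝ) : ℂ), 0, 0;
     0, 0, 0, 0;
     -(√(α/2) : ℂ), 0, 0, 1/2]

theorem posSemidef_rankOne_add_diagonal (a b c : ℝ) (hc : 0 ≤ c) :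
    (!![((a * a : ℝ) : ℂ), 0, 0, -((a * b : ℝ) : ℂ);
        0, (c : ℂ), 0, 0;
        0, 0, 0, 0;
        -((a * b : ℝ) : ℂ), 0, 0, ((b * b : ℝ) : ℂ)] : Matrix (Fin 4) (Fin 4) ℂ).PosSemidef := by
  have hsum : !![((a * a : ℝ) : ℂ), 0, 0, -((a * b : ℝ) : ℂ);
        0, (c : ℂ), 0, 0;
        0, 0, 0, 0;
        -((a * b : ℝ) : ℂ), 0, 0, ((b * b : ℝ) : ℂ)] =
      vecMulVec ![(a : ℂ), 0, 0, -(b : ℂ)] (star ![(a : ℂ), 0, 0, -(b : ℂ)])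
        + diagonal ![0, (c : ℂ), 0, 0] := by
    ext i j
    fin_cases i <;> fin_cases j <;> simp [vecMulVec, mul_comm]
  rw [hsum]
  refine (posSemidef_vecMulVec_self_star _).add (PosSemidef.diagonal fun i ↦ ?_)
  fin_cases i <;> simp [hc]

theorem posSemidef_eprState {α : ℝ} (hα : α ∈ Set.Icc (0 : ℝ) (1/2)) :
    (eprState α).PosSemidef := by
  have hρ : eprState α =
      !![((√α * √α : ℝ) : ℂ), 0, 0, -((√α * √(1/2) : ℝ) : ℂ);
         0, ((1/2 - α : ℝ) : ℂ), 0, 0;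
         0, 0, 0, 0;
         -((√α * √(1/2) : ℝ) : ℂ), 0, 0, ((√(1/2) * √(1/2) : ℝ) : ℂ)] := by
    rw [Real.mul_self_sqrt hα.1, ← Real.sqrt_mul hα.1, mul_one_div,
      Real.mul_self_sqrt (by norm_num)]
    simp [eprState]
  rw [hρ]
  exact posSemidef_rankOne_add_diagonal _ _ _ (sub_nonneg.2 hα.2)

theorem re_trace_eprState_mul_Cmat (y α : ℝ) :
    ((eprState α * Cmat y).trace).re = (9*y/16 - 9/20) * α + 3/5 * √(α/2) - 3/5 := by
  rw [re_trace_mul_Cmat]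
  simp only [eprState, of_apply, cons_val', cons_val_zero, cons_val_one, cons_val,
    cons_val_fin_one, Complex.add_re, Complex.neg_re, Complex.ofReal_re, zero_add,
    Complex.div_ofNat_re, Complex.one_re]
  ring

/-- The buyer's optimization over two-qubit states ρ ⪰ 0 with Tr₂(ρ) = I/2
    reduces to a one-dimensional maximization over α ∈ [0, 1/2]. -/
theorem epr_strategy_optimization (y : ℝ) :
    sSup {t : ℝ | ∃ ρ : Matrix (Fin 4) (Fin 4) ℂ, ρ.PosSemidef ∧
        ρ 0 0 + ρ 1 1 = 1/2 ∧ ρ 2 2 + ρ 3 3 = 1/2 ∧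
        ρ 0 2 + ρ 1 3 = 0 ∧ ρ 2 0 + ρ 3 1 = 0 ∧
        t = ((ρ * Cmat y).trace).re} =
    sSup {t : ℝ | ∃ α ∈ Set.Icc (0 : ℝ) (1/2),
        t = (9*y/16 - 9/20) * α + (3/5) * Real.sqrt (α/2) - 3/5} := by
  refine csSup_eq_csSup_of_forall_exists_le ?_ ?_
  · rintro _ ⟨ρ, hρ, h01, h23, -, -, rfl⟩
    have hα : (ρ 0 0).re ∈ Set.Icc (0 : ℝ) (1/2) := by
      simpa using hρ.re_apply_mem_Icc_of_add_eq h01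
    exact ⟨_, ⟨_, hα, rfl⟩, re_trace_mul_Cmat_le hρ h01 h23⟩
  · rintro _ ⟨α, hα, rfl⟩
    refine ⟨_, ⟨eprState α, posSemidef_eprState hα, ?_, ?_, ?_, ?_, rfl⟩,
      (re_trace_eprState_mul_Cmat y α).ge⟩ <;> simp [eprState]
end

section
/- There is no non-zero bivariate real polynomial P(x, y) such that P(x, W(e^{1−x}(2 − x))) = 0 for all x in some interval [0, r), r > 0. Consequently, the function v(x) = W(e^{1−x}(2−x)) is not semialgebraic on any interval [0, r). -/
/-- A basic semialgebraic subset of ℝⁿ: the solution set of one polynomial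
    equality and finitely many strict polynomial inequalities. -/
def IsBasicSemialgebraic {n : ℕ} (s : Set (Fin n → ℝ)) : Prop :=
  ∃ (p : MvPolynomial (Fin n) ℝ) (m : ℕ) (g : Fin m → MvPolynomial (Fin n) ℝ),
    s = {x | MvPolynomial.eval x p = 0 ∧ ∀ i, 0 < MvPolynomial.eval x (g i)}

/-- A semialgebraic set: a finite union of basic semialgebraic sets. -/
def IsSemialgebraic {n : ℕ} (s : Set (Fin n → ℝ)) : Prop :=
  ∃ (k : ℕ) (t : Fin k → Set (Fin n → ℝ)),
    (∀ i, IsBasicSemialgebraic (t i)) ∧ s = ⋃ i, t i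

/-!
Write `g x = e^(1-x) (2-x)`, so `v = W ∘ g` with `g > -1/e`. Since `w ↦ w e^w` has nonzero
derivative on `(-1, ∞)`, `W` is analytic on `(-1/e, ∞)`, so `v` is analytic on `ℝ` and a relation
`P(x, v x) = 0` on an infinite bounded set holds on all of `ℝ`. But `|v| ≤ e |g|` decays faster than
any polynomial while `v ≠ 0` for `x > 2`: writing `P = ∑ qⱼ(x) yʲ` and letting `x → ∞` gives
`q₀ = 0`, then dividing by `v` gives `q₁ = 0`, and so on.
If the graph were a finite union of basic semialgebraic sets, one of them would contain infinitely
many graph points over the bounded interval; its defining equation is then trivial, so it is an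
open set inside a graph, hence empty.
-/

open Polynomial Polynomial.Bivariate Filter Topology Set Real Asymptotics

lemma Polynomial.Bivariate.eval_equivMvPolynomial {R : Type*} [CommSemiring R] (Q : R[X][Y])
    (x y : R) : MvPolynomial.eval ![x, y] (equivMvPolynomial R Q) = Q.evalEval x y := by
  induction Q using Polynomial.induction_on' with
  | add p q hp hq => simp [hp, hq]
  | monomial n p =>
    induction p using Polynomial.induction_on' with
    | add p q hp hq => simp_all
    | monomial m a => simp [← C_mul_X_pow_eq_monomial, evalEval_C]

namespace Asymptotics.SuperpolynomialDecay

variable {v : ℝ → ℝ} (hdecay : SuperpolynomialDecay atTop id v)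
include hdecay

lemma tendsto_mul_evalEval (Q : ℝ[X][Y]) :
    Tendsto (fun x ↦ v x * Q.evalEval x (v x)) atTop (𝓝 0) := by
  have hv : Tendsto v atTop (𝓝 0) := by simpa using hdecay 0
  induction Q using Polynomial.induction_on' with
  | add p q hp hq => simpa only [evalEval_add, mul_add, add_zero] using hp.add hq
  | monomial n p =>
    have hp : Tendsto (fun x ↦ p.eval x * v x) atTop (𝓝 0) := by
      simpa using hdecay.polynomial_mul p 0
    have h := hp.mul (hv.pow n)
    rw [zero_mul] at h
    refine h.congr fun x ↦ ?_
    rw [← C_mul_X_pow_eq_monomial, evalEval_mul, evalEval_pow, evalEval_C, evalEval_X]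
    ring

theorem eq_zero_of_evalEval_eventually_eq_zero (hv0 : ∀ᶠ x in atTop, v x ≠ 0) (Q : ℝ[X][Y])
    (hQ : ∀ᶠ x in atTop, Q.evalEval x (v x) = 0) : Q = 0 := by
  have hsplit (x : ℝ) :
      Q.evalEval x (v x) = v x * Q.divX.evalEval x (v x) + (Q.coeff 0).eval x := by
    conv_lhs => rw [← X_mul_divX_add Q]
    rw [evalEval_add, evalEval_mul, evalEval_X, evalEval_C]
  have hcoeff : Q.coeff 0 = 0 := by
    have h := (hdecay.tendsto_mul_evalEval Q.divX).neg
    rw [neg_zero] at h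
    have : Tendsto (fun x ↦ (Q.coeff 0).eval x) atTop (𝓝 0) := by
      refine h.congr' ?_
      filter_upwards [hQ] with x hx
      rw [hsplit] at hx
      linarith
    exact leadingCoeff_eq_zero.1 ((tendsto_nhds_iff _).1 this).1
  by_cases hdivX : Q.divX = 0
  · rw [← X_mul_divX_add Q, hdivX, hcoeff]
    simp
  have : Q.divX.natDegree < Q.natDegree := by
    have : Q.natDegree ≠ 0 := fun h ↦ hdivX (divX_eq_zero_iff.2 (eq_C_of_natDegree_eq_zero h))
    rw [natDegree_divX_eq_natDegree_tsub_one]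
    omega
  refine absurd (eq_zero_of_evalEval_eventually_eq_zero hv0 Q.divX ?_) hdivX
  filter_upwards [hQ, hv0] with x hx hvx
  rw [hsplit, hcoeff, eval_zero, add_zero] at hx
  exact (mul_eq_zero.1 hx).resolve_left hvx
termination_by Q.natDegree

end Asymptotics.SuperpolynomialDecay

lemma AnalyticOnNhd.eq_zero_of_infinite_of_isBounded {E : Type*} [NormedAddCommGroup E]
    [NormedSpace ℝ E] {g : ℝ → E} (hg : AnalyticOnNhd ℝ g univ) {S : Set ℝ} (hS : S.Infinite)
    (hSb : Bornology.IsBounded S) (hgS : EqOn g 0 S) : g = 0 := by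
  obtain ⟨z, -, hz⟩ := hS.exists_accPt_of_subset_isCompact hSb.isCompact_closure subset_closure
  have hfreq : ∃ᶠ x in 𝓝[≠] z, g x = 0 :=
    (accPt_iff_frequently_nhdsNE.1 hz).mono fun x hx ↦ hgS hx
  exact funext fun x ↦ hg.eqOn_zero_of_preconnected_of_frequently_eq_zero isPreconnected_univ
    (mem_univ z) hfreq (mem_univ x)

theorem Asymptotics.SuperpolynomialDecay.eq_zero_of_eval_eq_zero_of_infinite {v : ℝ → ℝ}
    (hdecay : SuperpolynomialDecay atTop id v) (hv0 : ∀ᶠ x in atTop, v x ≠ 0)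
    (hva : AnalyticOnNhd ℝ v univ) (P : MvPolynomial (Fin 2) ℝ) {S : Set ℝ} (hS : S.Infinite)
    (hSb : Bornology.IsBounded S) (hP : ∀ x ∈ S, MvPolynomial.eval ![x, v x] P = 0) : P = 0 := by
  have hanalytic : AnalyticOnNhd ℝ (fun x ↦ MvPolynomial.eval ![x, v x] P) univ := fun x _ ↦ by
    simpa using AnalyticAt.aeval_mvPolynomial (A := ℝ) (f := fun x ↦ ![x, v x])
      (fun i ↦ by fin_cases i; exacts [analyticAt_id, hva x (mem_univ x)]) P
  have hzero := hanalytic.eq_zero_of_infinite_of_isBounded hS hSb hP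
  have hQ := hdecay.eq_zero_of_evalEval_eventually_eq_zero hv0 ((equivMvPolynomial ℝ).symm P)
    (Eventually.of_forall fun x ↦ by
      rw [← eval_equivMvPolynomial, AlgEquiv.apply_symm_apply]
      exact congrFun hzero x)
  simpa using hQ

lemma neg_exp_neg_one_le_mul_exp (w : ℝ) : -exp (-1) ≤ w * exp w := by
  have h : -w * exp (w + 1) ≤ 1 := by
    have := mul_le_mul_of_nonneg_right (add_one_le_exp (-(w + 1))) (exp_pos (w + 1)).le
    rwa [← exp_add, neg_add_cancel, exp_zero, show -(w + 1) + 1 = -w by ring] at this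
  have hw : w * exp w = w * exp (w + 1) * exp (-1) := by rw [mul_assoc, ← exp_add]; ring_nf
  nlinarith [exp_pos (-1)]

lemma hasDerivAt_mul_exp (w : ℝ) : HasDerivAt (fun w ↦ w * exp w) ((1 + w) * exp w) w := by
  simpa [add_mul] using (hasDerivAt_id' w).fun_mul (hasDerivAt_exp w)

lemma strictMonoOn_mul_exp : StrictMonoOn (fun w : ℝ ↦ w * exp w) (Ici (-1)) := by
  refine strictMonoOn_of_deriv_pos (convex_Ici _) (by fun_prop) fun w hw ↦ ?_
  rw [interior_Ici, mem_Ioi] at hw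
  rw [(hasDerivAt_mul_exp w).deriv]
  have : 0 < 1 + w := by linarith
  positivity

lemma abs_le_exp_one_mul_abs_mul_exp {w : ℝ} (hw : -1 ≤ w) : |w| ≤ exp 1 * |w * exp w| := by
  have h : 1 ≤ exp 1 * exp w := by rw [← exp_add]; exact one_le_exp (by linarith)
  rw [abs_mul, abs_of_pos (exp_pos w)]
  nlinarith [abs_nonneg w]

lemma neg_exp_neg_one_lt_exp_one_sub_mul_two_sub (x : ℝ) :
    -exp (-1) < exp (1 - x) * (2 - x) := by
  have h := neg_exp_neg_one_le_mul_exp (2 - x)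
  have hrw : exp (1 - x) * (2 - x) = exp (-1) * ((2 - x) * exp (2 - x)) := by
    rw [mul_left_comm, ← exp_add]; ring_nf
  have : exp (-1) < 1 := exp_lt_one_iff.2 (by norm_num)
  rw [hrw]
  nlinarith [exp_pos (-1)]

lemma superpolynomialDecay_exp_one_sub_mul_two_sub :
    SuperpolynomialDecay atTop id fun x ↦ exp (1 - x) * (2 - x) := by
  have hexp : SuperpolynomialDecay atTop id fun x ↦ exp (-x) :=
    tendsto_pow_mul_exp_neg_atTop_nhds_zero
  refine ((hexp.mul_polynomial (C 2 - X)).const_mul (exp 1)).congr fun x ↦ ?_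
  simp only [id, eval_sub, eval_C, eval_X, sub_eq_add_neg 1 x, exp_add]
  ring

section LambertW

variable {W : ℝ → ℝ} (hW : ∀ z, -exp (-1) ≤ z → W z * exp (W z) = z ∧ -1 ≤ W z)
include hW

lemma lambertW_mul_exp {w : ℝ} (hw : -1 ≤ w) : W (w * exp w) = w :=
  let h := hW _ (neg_exp_neg_one_le_mul_exp w)
  strictMonoOn_mul_exp.injOn h.2 hw h.1

lemma analyticAt_lambertW {z : ℝ} (hz : -exp (-1) < z) : AnalyticAt ℝ W z := by
  obtain ⟨hWz, hWz_ge⟩ := hW z hz.le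
  have hWz_gt : -1 < W z := hWz_ge.lt_of_ne fun h ↦ hz.ne (by rw [← hWz, ← h]; ring)
  have hf : AnalyticAt ℝ (fun w ↦ w * exp w) (W z) := analyticAt_id.mul analyticAt_rexp
  have hf' : deriv (fun w ↦ w * exp w) (W z) ≠ 0 := by
    rw [(hasDerivAt_mul_exp _).deriv]
    have : 0 < 1 + W z := by linarith
    positivity
  have hcomp : AnalyticAt ℝ (W ∘ fun w ↦ w * exp w) (W z) :=
    analyticAt_id.congr <| (eventually_gt_nhds hWz_gt).mono fun w hw ↦
      (lambertW_mul_exp hW hw.le).symm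
  simpa [hWz] using (analyticAt_comp_iff_of_deriv_ne_zero hf hf').1 hcomp

variable {v : ℝ → ℝ} (hv : ∀ x, v x = W (exp (1 - x) * (2 - x)))
include hv

lemma analyticOnNhd_lambertW_comp : AnalyticOnNhd ℝ v univ := fun x _ ↦ by
  rw [show v = fun y ↦ W (exp (1 - y) * (2 - y)) from funext hv]
  exact (analyticAt_lambertW hW (neg_exp_neg_one_lt_exp_one_sub_mul_two_sub x)).fun_comp
    (f := fun y ↦ exp (1 - y) * (2 - y)) (by fun_prop)

lemma eventually_lambertW_comp_ne_zero : ∀ᶠ x in atTop, v x ≠ 0 := by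
  filter_upwards [eventually_gt_atTop 2] with x hx hvx0
  obtain ⟨hvx, -⟩ := hv x ▸ hW _ (neg_exp_neg_one_lt_exp_one_sub_mul_two_sub x).le
  rw [hvx0, zero_mul] at hvx
  have := (mul_eq_zero.1 hvx.symm).resolve_left (exp_pos _).ne'
  linarith

lemma superpolynomialDecay_lambertW_comp : SuperpolynomialDecay atTop id v := by
  refine (superpolynomialDecay_exp_one_sub_mul_two_sub.const_mul (exp 1)).trans_abs_le fun x ↦ ?_
  obtain ⟨hvx, hvx_ge⟩ := hv x ▸ hW _ (neg_exp_neg_one_lt_exp_one_sub_mul_two_sub x).le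
  rw [abs_mul, abs_of_pos (exp_pos 1), ← hvx]
  exact abs_le_exp_one_mul_abs_mul_exp hvx_ge

end LambertW

lemma eq_empty_of_isOpen_of_subset_graph {f : ℝ → ℝ} {U : Set (Fin 2 → ℝ)} (hU : IsOpen U)
    (hUf : U ⊆ {p | p 1 = f (p 0)}) : U = ∅ := by
  refine eq_empty_of_forall_notMem fun q hq ↦ ?_
  have hcont : Continuous fun ε : ℝ ↦ Function.update q 1 (q 1 + ε) :=
    continuous_const.update 1 (continuous_const.add continuous_id)
  have h₀ : (fun ε : ℝ ↦ Function.update q 1 (q 1 + ε)) ⁻¹' U ∈ 𝓝 0 :=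
    hcont.continuousAt.preimage_mem_nhds (by simpa using hU.mem_nhds hq)
  have hnhds : ∀ᶠ ε in 𝓝[≠] (0 : ℝ), Function.update q 1 (q 1 + ε) ∈ U ∧ ε ≠ 0 :=
    Eventually.and (mem_nhdsWithin_of_mem_nhds h₀) self_mem_nhdsWithin
  obtain ⟨ε, hεU, hε⟩ := hnhds.exists
  have h₁ := hUf hεU
  have h₂ := hUf hq
  simp only [mem_ofPred_eq, Function.update_self, ne_eq, zero_ne_one, not_false_eq_true,
    Function.update_of_ne] at h₁ h₂
  exact hε (by linarith)

lemma not_isSemialgebraic_graph {f : ℝ → ℝ} {T : Set ℝ} (hT : T.Infinite)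
    (hf : ∀ (P : MvPolynomial (Fin 2) ℝ) (S : Set ℝ), S ⊆ T → S.Infinite →
      (∀ x ∈ S, MvPolynomial.eval ![x, f x] P = 0) → P = 0) :
    ¬ IsSemialgebraic {p : Fin 2 → ℝ | p 0 ∈ T ∧ p 1 = f (p 0)} := by
  rintro ⟨k, t, hbasic, hgraph⟩
  have hcover (x : ℝ) (hx : x ∈ T) : ∃ i, ![x, f x] ∈ t i :=
    mem_iUnion.1 (hgraph ▸ ⟨hx, rfl⟩)
  obtain ⟨i, hi⟩ : ∃ i, {x ∈ T | ![x, f x] ∈ t i}.Infinite := by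
    by_contra! h
    exact hT ((finite_iUnion h).subset fun x hx ↦
      mem_iUnion.2 ((hcover x hx).imp fun i hi ↦ ⟨hx, hi⟩))
  obtain ⟨p, m, g, hti⟩ := hbasic i
  have hp : p = 0 := hf p _ (sep_subset _ _) hi fun x hx ↦ (hti ▸ hx.2).1
  have hopen : IsOpen (t i) := by
    rw [hti, hp]
    simp only [map_zero, true_and, ofPred_forall]
    exact isOpen_iInter_of_finite fun j ↦
      isOpen_lt continuous_const (MvPolynomial.continuous_eval _)
  obtain ⟨x, hx⟩ := hi.nonempty
  have hempty := eq_empty_of_isOpen_of_subset_graph hopen fun q hq ↦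
    (hgraph ▸ mem_iUnion_of_mem i hq : q ∈ {p : Fin 2 → ℝ | p 0 ∈ T ∧ p 1 = f (p 0)}).2
  exact eq_empty_iff_forall_notMem.1 hempty _ hx.2

/-- The function v(x) = W(e^{1−x}(2−x)), where W is the principal branch of the
    Lambert W function (characterized by W(z)·e^{W(z)} = z and W(z) ≥ −1 on
    [−1/e, ∞)), satisfies no non-trivial polynomial relation on any interval
    [0, r); consequently its graph over [0, r) is not semialgebraic. -/
theorem lambert_not_semialgebraic
    (W : ℝ → ℝ)
    (hW : ∀ z : ℝ, -Real.exp (-1) ≤ z → W z * Real.exp (W z) = z ∧ -1 ≤ W z)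
    (v : ℝ → ℝ) (hv : ∀ x, v x = W (Real.exp (1 - x) * (2 - x)))
    (r : ℝ) (hr : 0 < r) :
    (¬ ∃ P : MvPolynomial (Fin 2) ℝ, P ≠ 0 ∧
        ∀ x ∈ Set.Ico (0 : ℝ) r, MvPolynomial.eval ![x, v x] P = 0) ∧
    ¬ IsSemialgebraic {x : Fin 2 → ℝ | x 0 ∈ Set.Ico (0 : ℝ) r ∧ x 1 = v (x 0)} := by
  have hrel (P : MvPolynomial (Fin 2) ℝ) (S : Set ℝ) (hST : S ⊆ Ico 0 r) (hS : S.Infinite)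
      (hP : ∀ x ∈ S, MvPolynomial.eval ![x, v x] P = 0) : P = 0 :=
    (superpolynomialDecay_lambertW_comp hW hv).eq_zero_of_eval_eq_zero_of_infinite
      (eventually_lambertW_comp_ne_zero hW hv) (analyticOnNhd_lambertW_comp hW hv) P hS
      ((Metric.isBounded_Ico 0 r).subset hST) hP
  exact ⟨fun ⟨P, hP0, hP⟩ ↦ hP0 (hrel P _ subset_rfl (Ico_infinite hr) hP),
    not_isSemialgebraic_graph (Ico_infinite hr) hrel⟩
end
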